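/- arXiv:1302.1728 — 4 statements merged into one kernel-verified Lean document; each statement's English description precedes it below -/
import Mathlib

section
/- (Roch's theorem) Let A be a unital C*-algebra and F a family of non-degenerate representations of A. Then F is strictly norming if and only if F is sufficient. That is: (for every a ∈ A there exists π ∈ F with ‖π(a)‖ = ‖a‖, and ‖a‖ = sup over π ∈ F of ‖π(a)‖) holds if and only if (for every a ∈ A, a is invertible iff π(a) is invertible for all π ∈ F). -/
section aux

variable {A B : Type*} [CStarAlgebra A] [CStarAlgebra B]

lemma roch_map_algebraMap_real (φ : A →⋆ₐ[ℂ] B) (t : ℝ) :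
    φ (algebraMap ℝ A t) = algebraMap ℝ B t := by
  rw [IsScalarTower.algebraMap_apply ℝ ℂ A, IsScalarTower.algebraMap_apply ℝ ℂ B,
    AlgHomClass.commutes]

lemma roch_isUnit_of_units (a : A) (h1 : IsUnit (star a * a)) (h2 : IsUnit (a * star a)) :
    IsUnit a := by
  obtain ⟨u, hu⟩ := h1
  obtain ⟨v, hv⟩ := h2
  have hl : ((↑u⁻¹ : A) * star a) * a = 1 := by
    rw [mul_assoc, ← hu, Units.inv_mul]
  have hr : a * (star a * (↑v⁻¹ : A)) = 1 := by
    rw [← mul_assoc, ← hv, Units.mul_inv]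
  have heq : (↑u⁻¹ : A) * star a = star a * (↑v⁻¹ : A) := by
    calc (↑u⁻¹ : A) * star a = ((↑u⁻¹ : A) * star a) * (a * (star a * ↑v⁻¹)) := by
          rw [hr, mul_one]
    _ = (((↑u⁻¹ : A) * star a) * a) * (star a * ↑v⁻¹) := by simp only [mul_assoc]
    _ = star a * (↑v⁻¹ : A) := by rw [hl, one_mul]
  exact ⟨⟨a, star a * ↑v⁻¹, hr, by rw [← heq]; exact hl⟩, rfl⟩

lemma roch_f_norm_le (t : ℝ) : ‖max (1 - |t|) 0‖ ≤ 1 := by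
  rw [Real.norm_eq_abs, abs_of_nonneg (le_max_right _ _)]
  rcases le_total (1 - |t|) 0 with h | h
  · simp [max_eq_right h]
  · rw [max_eq_left h]; have := abs_nonneg t; linarith

lemma roch_f_eq_one {t : ℝ} (h : max (1 - |t|) 0 = 1) : t = 0 := by
  rcases le_total (1 - |t|) 0 with h' | h'
  · rw [max_eq_right h'] at h; norm_num at h
  · rw [max_eq_left h'] at h
    have : |t| = 0 := by linarith
    exact abs_eq_zero.mp this

end aux

/-- **Roch's theorem.** A family of non-degenerate (hence unital)
representations of a unital C*-algebra is strictly norming iff it is sufficient. -/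
theorem stmt6 {A : Type*} [CStarAlgebra A] [Nontrivial A]
    {ι : Type*} (H : ι → Type*)
    [∀ i, NormedAddCommGroup (H i)] [∀ i, InnerProductSpace ℂ (H i)] [∀ i, CompleteSpace (H i)]
    (π : ∀ i, A →⋆ₐ[ℂ] (H i →L[ℂ] H i)) :
    ((∀ a : A, ∃ i, ‖(π i) a‖ = ‖a‖) ∧ (∀ a : A, ‖a‖ = ⨆ i, ‖(π i) a‖)) ↔
      (∀ a : A, IsUnit a ↔ ∀ i, IsUnit ((π i) a)) := by
  have hcontr : ∀ (a : A) (i : ι), ‖(π i) a‖ ≤ ‖a‖ := fun a i =>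
    NonUnitalStarAlgHom.norm_apply_le (π i) a
  constructor
  · rintro ⟨hatt, -⟩ a
    refine ⟨fun h i => h.map (π i), fun h => ?_⟩
    by_contra ha
    have key : ∀ b : A, IsSelfAdjoint b → ¬ IsUnit b → (∀ i, IsUnit ((π i) b)) → False := by
      intro b hb hbu hbi
      have h0 : (0 : ℝ) ∈ spectrum ℝ b := (spectrum.zero_mem_iff ℝ).mpr hbu
      set f : ℝ → ℝ := fun t => max (1 - |t|) 0 with hf
      have hfc : Continuous f := by fun_prop
      have hf0 : f 0 = 1 := by simp [hf]
      set c : A := cfc f b with hc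
      have hnc : ‖c‖ = 1 := by
        refine le_antisymm (norm_cfc_le zero_le_one fun t _ => roch_f_norm_le t) ?_
        have h2 := norm_apply_le_norm_cfc f b h0 hfc.continuousOn hb
        rw [hf0] at h2; simpa using h2
      obtain ⟨i, hi⟩ := hatt c
      rw [hnc] at hi
      have hnt : Nontrivial (H i →L[ℂ] H i) :=
        nontrivial_of_ne ((π i) c) 0 fun hz => by simp [hz] at hi
      have hπc : Continuous (π i) :=
        AddMonoidHomClass.continuous_of_bound (π i) 1 (fun x => by
          simpa [one_mul] using hcontr x i)
      have hmap : (π i) c = cfc f ((π i) b) :=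
        StarAlgHom.map_cfc (π i) f b hfc.continuousOn hπc hb (hb.map (π i))
      have hgreat := IsGreatest.norm_cfc (A := H i →L[ℂ] H i) f ((π i) b)
        hfc.continuousOn (hb.map (π i))
      have h1 : ‖cfc f ((π i) b)‖ = 1 := by rw [← hmap]; exact hi
      rw [h1] at hgreat
      obtain ⟨t, ht, ht1⟩ := hgreat.1
      have ht1' : ‖f t‖ = 1 := ht1
      have htf : f t = 1 := by
        rw [Real.norm_eq_abs, abs_of_nonneg (le_max_right _ _)] at ht1'
        exact ht1'
      rw [roch_f_eq_one htf] at ht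
      exact ((spectrum.zero_mem_iff ℝ).mp ht) (hbi i)
    have h1 : IsUnit (star a * a) → IsUnit (a * star a) → False := fun hu hv =>
      ha (roch_isUnit_of_units a hu hv)
    by_cases hu : IsUnit (star a * a)
    · refine key (a * star a) (IsSelfAdjoint.mul_star_self a) (fun hv => h1 hu hv) fun i => ?_
      rw [map_mul, map_star]
      exact ((h i).mul (h i).star)
    · refine key (star a * a) (IsSelfAdjoint.star_mul_self a) hu fun i => ?_
      rw [map_mul, map_star]
      exact ((h i).star.mul (h i))
  · intro hsuff
    have hatt : ∀ a : A, ∃ i, ‖(π i) a‖ = ‖a‖ := by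
      intro a
      by_cases h0 : a = 0
      · have hex : ¬ ∀ i, IsUnit ((π i) (0 : A)) := fun h =>
          not_isUnit_zero ((hsuff 0).mpr h)
        push_neg at hex
        obtain ⟨i, -⟩ := hex
        exact ⟨i, by simp [h0]⟩
      · set b : A := star a * a with hb
        have hbsa : IsSelfAdjoint b := IsSelfAdjoint.star_mul_self a
        obtain ⟨t, ht, htn⟩ : ∃ t : ℝ, t ∈ spectrum ℝ b ∧ |t| = ‖b‖ := by
          rcases CStarAlgebra.norm_or_neg_norm_mem_spectrum (a := b) hbsa with hm | hm
          · exact ⟨_, hm, abs_of_nonneg (norm_nonneg _)⟩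
          · exact ⟨_, hm, by simp⟩
        rw [spectrum.mem_iff] at ht
        have hex : ¬ ∀ i, IsUnit ((π i) (algebraMap ℝ A t - b)) := fun hi =>
          ht ((hsuff _).mpr hi)
        push_neg at hex
        obtain ⟨i, hi⟩ := hex
        have halg : (π i) (algebraMap ℝ A t) = algebraMap ℝ (H i →L[ℂ] H i) t := by
          rw [IsScalarTower.algebraMap_apply ℝ ℂ A,
            IsScalarTower.algebraMap_apply ℝ ℂ (H i →L[ℂ] H i), AlgHomClass.commutes]
        rw [map_sub, halg] at hi
        have hts : t ∈ spectrum ℝ ((π i) b) := spectrum.mem_iff.mpr hi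
        have hle : |t| ≤ ‖(π i) b‖ := by
          have h2 := spectrum.norm_le_norm_mul_of_mem hts
          have h3 : ‖(1 : H i →L[ℂ] H i)‖ ≤ 1 := by
            rw [ContinuousLinearMap.one_def]
            exact ContinuousLinearMap.norm_id_le
          have h4 : (0:ℝ) ≤ ‖(π i) b‖ := norm_nonneg _
          rw [Real.norm_eq_abs] at h2
          nlinarith
        have hnormb : ‖b‖ ≤ ‖(π i) b‖ := htn ▸ hle
        have hb2 : ‖b‖ = ‖a‖ ^ 2 := by
          rw [hb, CStarRing.norm_star_mul_self, sq]
        have hpib : ‖(π i) b‖ = ‖(π i) a‖ ^ 2 := by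
          rw [hb, map_mul, map_star, CStarRing.norm_star_mul_self, sq]
        rw [hb2, hpib] at hnormb
        have hfin : ‖a‖ ≤ ‖(π i) a‖ := by
          nlinarith [norm_nonneg ((π i) a), norm_nonneg a]
        exact ⟨i, le_antisymm (hcontr a i) hfin⟩
    refine ⟨hatt, fun a => ?_⟩
    obtain ⟨i, hi⟩ := hatt a
    have hbdd : BddAbove (Set.range fun i => ‖(π i) a‖) :=
      ⟨‖a‖, by rintro x ⟨j, rfl⟩; exact hcontr a j⟩
    have hne : Nonempty ι := ⟨i⟩
    exact le_antisymm (hi ▸ le_ciSup hbdd i) (ciSup_le fun j => hcontr a j)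
end

section
/- Let A be a unital C*-algebra and F a sufficient family of representations of A. Then for every a ∈ A there exists π ∈ F such that ‖π(a)‖ = ‖a‖. -/
/-- If a family of representations of a unital C*-algebra is sufficient,
then for every `a` there is a member of the family attaining `‖a‖`. -/
theorem stmt7 {A : Type*} [CStarAlgebra A] [Nontrivial A]
    {ι : Type*} (H : ι → Type*)
    [∀ i, NormedAddCommGroup (H i)] [∀ i, InnerProductSpace ℂ (H i)] [∀ i, CompleteSpace (H i)]
    (π : ∀ i, A →⋆ₐ[ℂ] (H i →L[ℂ] H i))
    (hsuf : ∀ a : A, IsUnit a ↔ ∀ i, IsUnit ((π i) a)) :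
    ∀ a : A, ∃ i, ‖(π i) a‖ = ‖a‖ := by
  intro a
  set b := star a * a with hb_def
  have hb : IsSelfAdjoint b := IsSelfAdjoint.star_mul_self a
  obtain ⟨z, hz, hz'⟩ := spectrum.exists_nnnorm_eq_spectralRadius b
  have hzn : ‖z‖ = ‖b‖ := by
    rw [hb.spectralRadius_eq_nnnorm] at hz'
    have : ‖z‖₊ = ‖b‖₊ := by exact_mod_cast hz'
    exact congrArg NNReal.toReal this
  rw [spectrum.mem_iff] at hz
  have : ¬ ∀ i, IsUnit ((π i) (algebraMap ℂ A z - b)) := fun h => hz ((hsuf _).mpr h)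
  push_neg at this
  obtain ⟨i, hi⟩ := this
  have hmap : (π i) (algebraMap ℂ A z - b) = algebraMap ℂ (H i →L[ℂ] H i) z - (π i) b := by
    rw [map_sub, AlgHomClass.commutes]
  rw [hmap] at hi
  have hzspec : z ∈ spectrum ℂ ((π i) b) := spectrum.mem_iff.mpr hi
  have h1 : ‖z‖ ≤ ‖(π i) b‖ * ‖(1 : H i →L[ℂ] H i)‖ := spectrum.norm_le_norm_mul_of_mem hzspec
  have h2 : ‖(1 : H i →L[ℂ] H i)‖ ≤ 1 := ContinuousLinearMap.norm_id_le
  have hle : ‖b‖ ≤ ‖(π i) b‖ := by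
    calc ‖b‖ = ‖z‖ := hzn.symm
    _ ≤ ‖(π i) b‖ * ‖(1 : H i →L[ℂ] H i)‖ := h1
    _ ≤ ‖(π i) b‖ * 1 := by gcongr
    _ = ‖(π i) b‖ := mul_one _
  have hge : ‖(π i) b‖ ≤ ‖b‖ := NonUnitalStarAlgHom.norm_apply_le (π i) b
  have hbeq : ‖(π i) b‖ = ‖b‖ := le_antisymm hge hle
  refine ⟨i, ?_⟩
  have key : ‖(π i) a‖ ^ 2 = ‖a‖ ^ 2 := by
    rw [sq, sq, ← CStarRing.norm_star_mul_self, ← CStarRing.norm_star_mul_self (x := a),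
      ← map_star, ← map_mul]
    exact hbeq
  nlinarith [norm_nonneg ((π i) a), norm_nonneg a, key]
end

section
/- Let A be a unital C*-algebra and F a strictly norming family of representations of A (for each a ∈ A there is π ∈ F with ‖π(a)‖ = ‖a‖). If a ∈ A is non-invertible, then there exists π ∈ F such that π(a) is non-invertible. -/
/-!
If `a` is not invertible, then neither is one of the positive elements `c = a⋆a`, `c = aa⋆`
(a one-sided inverse of `a` would otherwise be two-sided). For such a `c` and any `r ≥ ‖c‖`, the
positive element `b = r - c` has `r` in its spectrum (because `0 ∈ σ(c)`) and `b ≤ r`, so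
`‖b‖ = r`. A representation `π` with `‖π b‖ = ‖b‖ = r` sends `b` to a positive operator of norm
`r`, hence `r ∈ σ(π b)`, i.e. `π c = r - π b` is not invertible. Choosing `r = ‖c‖ + 1 > 0`
guarantees that the target of `π` is nontrivial.
-/

theorem isUnit_of_isUnit_mul_of_isUnit_mul {M : Type*} [Monoid M] {a b c : M}
    (hba : IsUnit (b * a)) (hac : IsUnit (a * c)) : IsUnit a := by
  obtain ⟨u, hu⟩ := hba
  obtain ⟨v, hv⟩ := hac
  have hleft : (↑u⁻¹ * b) * a = 1 := by rw [mul_assoc, ← hu, Units.inv_mul]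
  have hright : a * (c * ↑v⁻¹) = 1 := by rw [← mul_assoc, ← hv, Units.mul_inv]
  exact isUnit_iff_exists.mpr ⟨_, hright, left_inv_eq_right_inv hleft hright ▸ hleft⟩

theorem not_isUnit_star_mul_self_or_mul_star_self {R : Type*} [Monoid R] [StarMul R] {a : R}
    (ha : ¬IsUnit a) : ¬IsUnit (star a * a) ∨ ¬IsUnit (a * star a) :=
  not_and_or.mp fun h ↦ ha (isUnit_of_isUnit_mul_of_isUnit_mul h.1 h.2)

def StarAlgHom.IsStrictlyNorming {A ι : Type*} [CStarAlgebra A] {B : ι → Type*}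
    [∀ i, CStarAlgebra (B i)] (φ : ∀ i, A →⋆ₐ[ℂ] B i) : Prop :=
  ∀ a, ∃ i, ‖φ i a‖ = ‖a‖

section CStarAlgebra

variable {A : Type*} [CStarAlgebra A] [PartialOrder A] [StarOrderedRing A]

theorem CStarAlgebra.norm_algebraMap_sub_of_not_isUnit {c : A} (hc : 0 ≤ c) (hcu : ¬IsUnit c)
    {r : ℝ} (hr : 0 ≤ r) (hcr : c ≤ algebraMap ℝ A r) : ‖algebraMap ℝ A r - c‖ = r := by
  have : Nontrivial A := not_subsingleton_iff_nontrivial.mp fun _ ↦ hcu (isUnit_of_subsingleton c)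
  have hmem : r ∈ spectrum ℝ (algebraMap ℝ A r - c) := by
    rwa [spectrum.mem_iff, sub_sub_cancel]
  refine le_antisymm ?_ ?_
  · exact (norm_le_iff_le_algebraMap _ hr (sub_nonneg.mpr hcr)).mpr (sub_le_self _ hc)
  · simpa [abs_of_nonneg hr] using spectrum.norm_le_norm_of_mem hmem

variable {B : Type*} [CStarAlgebra B] [PartialOrder B] [StarOrderedRing B]

theorem StarAlgHom.not_isUnit_apply_algebraMap_sub_of_norm_apply (φ : A →⋆ₐ[ℂ] B) {x : A}
    (hx : 0 ≤ x) {r : ℝ} (hr : 0 < r) (hφ : ‖φ x‖ = r) :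
    ¬IsUnit (φ (algebraMap ℝ A r - x)) := by
  have : Nontrivial B := nontrivial_of_ne _ 0 (norm_pos_iff.mp (hφ ▸ hr))
  have hmem := CStarAlgebra.norm_mem_spectrum_of_nonneg (map_nonneg φ hx)
  have hcomm : φ (algebraMap ℝ A r) = algebraMap ℝ B r :=
    ((φ : A →ₐ[ℂ] B).restrictScalars ℝ).commutes r
  rw [map_sub, hcomm]
  rwa [hφ, spectrum.mem_iff] at hmem

end CStarAlgebra

theorem StarAlgHom.IsStrictlyNorming.exists_not_isUnit_apply_of_nonneg {A ι : Type*}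
    [CStarAlgebra A] [PartialOrder A] [StarOrderedRing A] {B : ι → Type*}
    [∀ i, CStarAlgebra (B i)] {φ : ∀ i, A →⋆ₐ[ℂ] B i} (hφ : StarAlgHom.IsStrictlyNorming φ)
    {c : A} (hc : 0 ≤ c) (hcu : ¬IsUnit c) : ∃ i, ¬IsUnit (φ i c) := by
  let _ := fun i ↦ CStarAlgebra.spectralOrder (B i)
  have := fun i ↦ CStarAlgebra.spectralOrderedRing (B i)
  obtain ⟨r, hr, hcr⟩ : ∃ r : ℝ, 0 < r ∧ c ≤ algebraMap ℝ A r :=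
    ⟨‖c‖ + 1, by positivity, (CStarAlgebra.norm_le_iff_le_algebraMap c (by positivity) hc).mp
      (le_add_of_nonneg_right zero_le_one)⟩
  obtain ⟨i, hi⟩ := hφ (algebraMap ℝ A r - c)
  rw [CStarAlgebra.norm_algebraMap_sub_of_not_isUnit hc hcu hr.le hcr] at hi
  refine ⟨i, ?_⟩
  simpa only [sub_sub_cancel] using
    (φ i).not_isUnit_apply_algebraMap_sub_of_norm_apply (sub_nonneg.mpr hcr) hr hi

theorem StarAlgHom.IsStrictlyNorming.exists_not_isUnit_apply {A ι : Type*} [CStarAlgebra A]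
    {B : ι → Type*} [∀ i, CStarAlgebra (B i)] {φ : ∀ i, A →⋆ₐ[ℂ] B i}
    (hφ : StarAlgHom.IsStrictlyNorming φ) {a : A} (ha : ¬IsUnit a) : ∃ i, ¬IsUnit (φ i a) := by
  let _ := CStarAlgebra.spectralOrder A
  have := CStarAlgebra.spectralOrderedRing A
  rcases not_isUnit_star_mul_self_or_mul_star_self ha with h | h
  · obtain ⟨i, hi⟩ := hφ.exists_not_isUnit_apply_of_nonneg (star_mul_self_nonneg a) h
    exact ⟨i, fun hu ↦ hi (by simpa only [map_mul, map_star] using hu.star.mul hu)⟩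
  · obtain ⟨i, hi⟩ := hφ.exists_not_isUnit_apply_of_nonneg (mul_star_self_nonneg a) h
    exact ⟨i, fun hu ↦ hi (by simpa only [map_mul, map_star] using hu.mul hu.star)⟩

theorem stmt8_general {A : Type*} [CStarAlgebra A]
    {ι : Type*} (H : ι → Type*)
    [∀ i, NormedAddCommGroup (H i)] [∀ i, InnerProductSpace ℂ (H i)] [∀ i, CompleteSpace (H i)]
    (π : ∀ i, A →⋆ₐ[ℂ] (H i →L[ℂ] H i))
    (hsn : ∀ a : A, ∃ i, ‖(π i) a‖ = ‖a‖)
    (a : A) (ha : ¬ IsUnit a) :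
    ∃ i, ¬ IsUnit ((π i) a) :=
  StarAlgHom.IsStrictlyNorming.exists_not_isUnit_apply hsn ha

/-- If a family of representations of a unital C*-algebra is strictly
norming and `a` is non-invertible, then some member of the family sends `a` to a
non-invertible operator. -/
theorem stmt8 {A : Type*} [CStarAlgebra A] [Nontrivial A]
    {ι : Type*} (H : ι → Type*)
    [∀ i, NormedAddCommGroup (H i)] [∀ i, InnerProductSpace ℂ (H i)] [∀ i, CompleteSpace (H i)]
    (π : ∀ i, A →⋆ₐ[ℂ] (H i →L[ℂ] H i))
    (hsn : ∀ a : A, ∃ i, ‖(π i) a‖ = ‖a‖)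
    (a : A) (ha : ¬ IsUnit a) :
    ∃ i, ¬ IsUnit ((π i) a) :=
  stmt8_general H π hsn a ha
end

section
/- Let A be a unital C*-algebra and F a family of unital representations of A. If F is sufficient, then F is norming: ‖a‖ = sup_{π ∈ F} ‖π(a)‖ for every a ∈ A. -/
open scoped ENNReal NNReal

/-- A sufficient family of unital representations of a unital
C*-algebra is norming: `‖a‖ = ⨆_{π ∈ F} ‖π a‖` for all `a`. -/
theorem stmt19 {A : Type*} [CStarAlgebra A] [Nontrivial A]
    {ι : Type*} (H : ι → Type*)
    [∀ i, NormedAddCommGroup (H i)] [∀ i, InnerProductSpace ℂ (H i)] [∀ i, CompleteSpace (H i)]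
    (π : ∀ i, A →⋆ₐ[ℂ] (H i →L[ℂ] H i))
    (hsuf : ∀ a : A, IsUnit a ↔ ∀ i, IsUnit ((π i) a)) :
    ∀ a : A, ‖a‖ = ⨆ i, ‖(π i) a‖ := by
  have hne : Nonempty ι := by
    by_contra h
    have : IsUnit (0 : A) := (hsuf 0).mpr fun i => absurd ⟨i⟩ h
    exact not_isUnit_zero this
  -- spectrum of any element is the union of spectra of its images
  have hspec : ∀ b : A, spectrum ℂ b = ⋃ i, spectrum ℂ ((π i) b) := by
    intro b
    ext z
    simp only [Set.mem_iUnion, spectrum.mem_iff]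
    rw [hsuf (algebraMap ℂ A z - b)]
    push_neg
    constructor
    · rintro ⟨i, hi⟩
      refine ⟨i, ?_⟩
      rwa [map_sub, AlgHomClass.commutes] at hi
    · rintro ⟨i, hi⟩
      refine ⟨i, ?_⟩
      rwa [map_sub, AlgHomClass.commutes]
  -- norm of selfadjoint elements is attained as sup
  have hsa : ∀ b : A, IsSelfAdjoint b → ‖b‖₊ = ⨆ i, ‖(π i) b‖₊ := by
    intro b hb
    have hbdd : BddAbove (Set.range fun i => ‖(π i) b‖₊) :=
      ⟨‖b‖₊, by rintro x ⟨i, rfl⟩; exact NonUnitalStarAlgHom.nnnorm_apply_le (π i) b⟩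
    have key : (‖b‖₊ : ℝ≥0∞) = ⨆ i, (‖(π i) b‖₊ : ℝ≥0∞) := by
      rw [← hb.spectralRadius_eq_nnnorm]
      unfold spectralRadius
      rw [hspec b, iSup_iUnion]
      congr 1
      ext i
      exact (hb.map (π i)).spectralRadius_eq_nnnorm
    rw [← ENNReal.coe_iSup hbdd] at key
    exact_mod_cast key
  intro a
  have hbdd : BddAbove (Set.range fun i => ‖(π i) a‖) :=
    ⟨‖a‖, by rintro x ⟨i, rfl⟩; exact NonUnitalStarAlgHom.norm_apply_le (π i) a⟩
  have hs0 : (0 : ℝ) ≤ ⨆ i, ‖(π i) a‖ :=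
    le_ciSup_of_le hbdd hne.some (norm_nonneg _)
  refine le_antisymm ?_ (ciSup_le fun i => NonUnitalStarAlgHom.norm_apply_le (π i) a)
  rw [← pow_le_pow_iff_left₀ (norm_nonneg a) hs0 two_ne_zero]
  have hb : ‖a‖ ^ 2 = ‖star a * a‖ := by
    rw [CStarRing.norm_star_mul_self, sq]
  rw [hb]
  have := hsa (star a * a) (IsSelfAdjoint.star_mul_self a)
  have hnorm : ‖star a * a‖ = ⨆ i, ‖(π i) (star a * a)‖ := by
    have := congrArg (fun x : ℝ≥0 => (x : ℝ)) this
    simpa [NNReal.coe_iSup] using this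
  rw [hnorm]
  refine ciSup_le fun i => ?_
  have : ‖(π i) (star a * a)‖ = ‖(π i) a‖ ^ 2 := by
    rw [map_mul, map_star, CStarRing.norm_star_mul_self, sq]
  rw [this]
  exact pow_le_pow_left₀ (norm_nonneg _) (le_ciSup hbdd i) 2
end
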